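/- arXiv:1712.02103 — 3 statements merged into one kernel-verified Lean document; each statement's English description precedes it below -/
import Mathlib

section
/- Let S be a finite set of jobs and S' ⊆ S. Let π and π' be two permutations of S', and let σ be a permutation of S \ S'. Suppose each job i has a nondecreasing cost function f_i and define F(π) as the sum over all jobs i occurring in π of f_i(C_i(π)). If C_2(π) ≤ C_2(π'), C_3(π) ≤ C_3(π') and F(π) ≤ F(π'), then C_2(π ++ σ) ≤ C_2(π' ++ σ), C_3(π ++ σ) ≤ C_3(π' ++ σ) and F(π ++ σ) ≤ F(π' ++ σ). -/
/-- Machine completion times `(C₁, C₂, C₃)` of a job sequence in a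
three-machine flowshop with processing times `p i j`. -/
def flowComp (p : ℕ → Fin 3 → ℕ) (π : List ℕ) : ℕ × ℕ × ℕ :=
  π.foldl (fun c i =>
    let c1 := c.1 + p i 0
    let c2 := max c.2.1 c1 + p i 1
    let c3 := max c.2.2 c2 + p i 2
    (c1, c2, c3)) (0, 0, 0)

/-- Completion time on machine 2. -/
def C2 (p : ℕ → Fin 3 → ℕ) (π : List ℕ) : ℕ := (flowComp p π).2.1

/-- Completion time on machine 3. -/
def C3 (p : ℕ → Fin 3 → ℕ) (π : List ℕ) : ℕ := (flowComp p π).2.2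

/-- `π` is a permutation of the finite jobset `S`: it lists each element
of `S` exactly once. -/
def IsPermOf (π : List ℕ) (S : Finset ℕ) : Prop :=
  π.Nodup ∧ ∀ x, x ∈ π ↔ x ∈ S

/-- Completion time of job `i` in the sequence `π`: `C₃` of the prefix of `π`
ending at (the first occurrence of) `i`. -/
def jobC (p : ℕ → Fin 3 → ℕ) (π : List ℕ) (i : ℕ) : ℕ :=
  C3 p (π.takeWhile (· != i) ++ [i])

/-- `F(π)`: the sum over jobs `i` occurring in `π` of `f i (C_i(π))`. -/
noncomputable def Fcost (p : ℕ → Fin 3 → ℕ) (f : ℕ → ℕ → ℝ) (π : List ℕ) : ℝ :=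
  (π.map (fun i => f i (jobC p π i))).sum

/-!
One scheduling step is monotone in the machine state `(C₁, C₂, C₃)` for the componentwise
order, and `C₁` is the total first-machine load, the same for `π` and `π'`; hence `π ++ τ`
ends in a state below that of `π' ++ τ` for every continuation `τ`. As `σ` avoids the jobs of
`S'`, the jobs of `π` keep their completion times in `π ++ σ`, while a job `i` of `σ` completes
at `C₃(π ++ τ)` for a prefix `τ` of `σ` independent of `π`, so monotonicity of `f i` compares
its cost with that in `π' ++ σ`.
-/

namespace Flowshop

variable (p : ℕ → Fin 3 → ℕ)

def flowStep (c : ℕ × ℕ × ℕ) (i : ℕ) : ℕ × ℕ × ℕ :=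
  let c1 := c.1 + p i 0
  let c2 := max c.2.1 c1 + p i 1
  (c1, c2, max c.2.2 c2 + p i 2)

theorem flowComp_eq_foldl (π : List ℕ) : flowComp p π = π.foldl (flowStep p) (0, 0, 0) := rfl

theorem flowComp_append (π σ : List ℕ) :
    flowComp p (π ++ σ) = σ.foldl (flowStep p) (flowComp p π) := by
  simp only [flowComp_eq_foldl, List.foldl_append]

theorem foldl_flowStep_fst (σ : List ℕ) (c : ℕ × ℕ × ℕ) :
    (σ.foldl (flowStep p) c).1 = c.1 + (σ.map (p · 0)).sum := by
  induction σ generalizing c with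
  | nil => simp
  | cons i σ ih => simp only [List.foldl_cons, ih, flowStep, List.map_cons, List.sum_cons]; omega

theorem flowComp_fst (π : List ℕ) : (flowComp p π).1 = (π.map (p · 0)).sum := by
  rw [flowComp_eq_foldl, foldl_flowStep_fst, zero_add]

theorem flowStep_mono (i : ℕ) : Monotone (flowStep p · i) := by
  rintro ⟨a₁, a₂, a₃⟩ ⟨b₁, b₂, b₃⟩ ⟨h₁, h₂, h₃⟩
  simp only [flowStep, Prod.mk_le_mk] at *
  omega

theorem foldl_flowStep_mono (σ : List ℕ) : Monotone (σ.foldl (flowStep p)) := by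
  induction σ with
  | nil => exact monotone_id
  | cons i σ ih => exact ih.comp (flowStep_mono p i)

theorem flowComp_append_mono {π π' : List ℕ} (h : flowComp p π ≤ flowComp p π') (τ : List ℕ) :
    flowComp p (π ++ τ) ≤ flowComp p (π' ++ τ) := by
  simpa only [flowComp_append] using foldl_flowStep_mono p τ h

theorem flowComp_le_of_perm {π π' : List ℕ} (hperm : π.Perm π') (h₂ : C2 p π ≤ C2 p π')
    (h₃ : C3 p π ≤ C3 p π') : flowComp p π ≤ flowComp p π' := by
  refine ⟨?_, h₂, h₃⟩
  rw [flowComp_fst, flowComp_fst, (hperm.map _).sum_eq]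

theorem jobC_append_of_mem {π : List ℕ} (σ : List ℕ) {i : ℕ} (h : i ∈ π) :
    jobC p (π ++ σ) i = jobC p π i := by
  have hne : π.takeWhile (· != i) ≠ π := fun heq => by
    simpa using List.takeWhile_eq_self_iff.mp heq i h
  rw [jobC, jobC, List.takeWhile_append, if_neg]
  exact fun hlen => hne ((List.takeWhile_prefix _).eq_of_length hlen)

theorem jobC_append_of_not_mem {π : List ℕ} (σ : List ℕ) {i : ℕ} (h : i ∉ π) :
    jobC p (π ++ σ) i = C3 p (π ++ (σ.takeWhile (· != i) ++ [i])) := by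
  rw [jobC, List.takeWhile_append_of_pos, List.append_assoc]
  rintro j hj
  simpa using ne_of_mem_of_not_mem hj h

theorem Fcost_append (f : ℕ → ℕ → ℝ) {π σ : List ℕ} (hd : π.Disjoint σ) :
    Fcost p f (π ++ σ) = Fcost p f π +
      (σ.map fun i => f i (C3 p (π ++ (σ.takeWhile (· != i) ++ [i])))).sum := by
  rw [Fcost, Fcost, List.map_append, List.sum_append]
  congr 2
  · exact List.map_congr_left fun i hi => by rw [jobC_append_of_mem p σ hi]
  · exact List.map_congr_left fun i hi => by rw [jobC_append_of_not_mem p σ (hd.symm hi)]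

theorem Fcost_append_le {f : ℕ → ℕ → ℝ} (hf : ∀ i, Monotone (f i)) {π π' σ : List ℕ}
    (hd : π.Disjoint σ) (hd' : π'.Disjoint σ) (hcomp : flowComp p π ≤ flowComp p π')
    (hF : Fcost p f π ≤ Fcost p f π') : Fcost p f (π ++ σ) ≤ Fcost p f (π' ++ σ) := by
  rw [Fcost_append p f hd, Fcost_append p f hd']
  refine add_le_add hF (List.sum_le_sum fun i _ => ?_)
  exact hf i (flowComp_append_mono p hcomp _).2.2

end Flowshop

open Flowshop

theorem stmt_2_general (p : ℕ → Fin 3 → ℕ) (f : ℕ → ℕ → ℝ)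
    (hfmono : ∀ i, Monotone (f i))
    (S S' : Finset ℕ)
    (π π' σ : List ℕ) (hπ : IsPermOf π S') (hπ' : IsPermOf π' S')
    (hσ : IsPermOf σ (S \ S'))
    (h2 : C2 p π ≤ C2 p π') (h3 : C3 p π ≤ C3 p π')
    (hf : Fcost p f π ≤ Fcost p f π') :
    C2 p (π ++ σ) ≤ C2 p (π' ++ σ) ∧ C3 p (π ++ σ) ≤ C3 p (π' ++ σ) ∧
      Fcost p f (π ++ σ) ≤ Fcost p f (π' ++ σ) := by
  have hperm : π.Perm π' :=
    (List.perm_ext_iff_of_nodup hπ.1 hπ'.1).mpr fun x => by rw [hπ.2, hπ'.2]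
  have hcomp := flowComp_le_of_perm p hperm h2 h3
  have disjoint_σ {ρ : List ℕ} (hρ : IsPermOf ρ S') : ρ.Disjoint σ := fun i hiρ hiσ =>
    (Finset.mem_sdiff.mp ((hσ.2 i).mp hiσ)).2 ((hρ.2 i).mp hiρ)
  exact ⟨(flowComp_append_mono p hcomp σ).2.1, (flowComp_append_mono p hcomp σ).2.2,
    Fcost_append_le p hfmono (disjoint_σ hπ) (disjoint_σ hπ') hcomp hf⟩

theorem stmt_2 (p : ℕ → Fin 3 → ℕ) (f : ℕ → ℕ → ℝ)
    (hfmono : ∀ i, Monotone (f i)) (hfnn : ∀ i t, 0 ≤ f i t)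
    (S S' : Finset ℕ) (hS' : S' ⊆ S)
    (π π' σ : List ℕ) (hπ : IsPermOf π S') (hπ' : IsPermOf π' S')
    (hσ : IsPermOf σ (S \ S'))
    (h2 : C2 p π ≤ C2 p π') (h3 : C3 p π ≤ C3 p π')
    (hf : Fcost p f π ≤ Fcost p f π') :
    C2 p (π ++ σ) ≤ C2 p (π' ++ σ) ∧ C3 p (π ++ σ) ≤ C3 p (π' ++ σ) ∧
      Fcost p f (π ++ σ) ≤ Fcost p f (π' ++ σ) :=
  stmt_2_general p f hfmono S S' π π' σ hπ hπ' hσ h2 h3 hf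
end

section
/- Let S be a nonempty finite jobset and let σ be any permutation of S, written σ = π₀ ++ [k] for its last job k. Then there exists a permutation π of S \ {k} that is non-dominated among permutations of S \ {k} and satisfies C_2(π ++ [k]) ≤ C_2(σ) and C_3(π ++ [k]) ≤ C_3(σ). -/
/-- `π` is non-dominated among the permutations of `S'`: no permutation `π''`
of `S'` satisfies `C₂(π'') ≤ C₂(π)`, `C₃(π'') ≤ C₃(π)` with
`(C₂(π''), C₃(π'')) ≠ (C₂(π), C₃(π))`. -/
def NonDominated (p : ℕ → Fin 3 → ℕ) (π : List ℕ) (S' : Finset ℕ) : Prop :=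
  ¬ ∃ π'' : List ℕ, IsPermOf π'' S' ∧ C2 p π'' ≤ C2 p π ∧ C3 p π'' ≤ C3 p π ∧
      (C2 p π'', C3 p π'') ≠ (C2 p π, C3 p π)

/-!
Machine 1 never idles, so `C₁` of a sequence is the sum of the first processing times and
does not depend on the order. Appending `k` is monotone in `(C₁, C₂, C₃)`, hence any order
of `S \ {k}` that is componentwise no worse in `(C₂, C₃)` than `π₀` keeps `π ++ [k]` no
worse than `σ`. Such an order can be taken non-dominated: replacing a dominated order by a
dominating one strictly decreases `C₂ + C₃`.
-/

lemma flowComp_append (p : ℕ → Fin 3 → ℕ) (π : List ℕ) (k : ℕ) :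
    flowComp p (π ++ [k]) =
      ((flowComp p π).1 + p k 0,
        max (flowComp p π).2.1 ((flowComp p π).1 + p k 0) + p k 1,
        max (flowComp p π).2.2 (max (flowComp p π).2.1 ((flowComp p π).1 + p k 0) + p k 1)
          + p k 2) := by
  simp [flowComp, List.foldl_append]

lemma flowComp_fst (p : ℕ → Fin 3 → ℕ) (π : List ℕ) :
    (flowComp p π).1 = (π.map (p · 0)).sum := by
  induction π using List.reverseRecOn with
  | nil => rfl
  | append_singleton π k ih => simp [flowComp_append, ih]

lemma flowComp_fst_eq_of_perm (p : ℕ → Fin 3 → ℕ) {π π' : List ℕ} (h : π.Perm π') :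
    (flowComp p π).1 = (flowComp p π').1 := by
  rw [flowComp_fst, flowComp_fst, (h.map _).sum_eq]

lemma C2_C3_append_le (p : ℕ → Fin 3 → ℕ) {π π' : List ℕ} (k : ℕ)
    (h1 : (flowComp p π).1 = (flowComp p π').1) (h2 : C2 p π ≤ C2 p π')
    (h3 : C3 p π ≤ C3 p π') :
    C2 p (π ++ [k]) ≤ C2 p (π' ++ [k]) ∧ C3 p (π ++ [k]) ≤ C3 p (π' ++ [k]) := by
  simp only [C2, C3] at h2 h3
  simp only [C2, C3, flowComp_append, h1]
  constructor <;> gcongr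

lemma IsPermOf.perm {π π' : List ℕ} {S : Finset ℕ} (h : IsPermOf π S) (h' : IsPermOf π' S) :
    π.Perm π' :=
  (List.perm_ext_iff_of_nodup h.1 h'.1).mpr fun x => (h.2 x).trans (h'.2 x).symm

lemma IsPermOf.of_append_singleton {π : List ℕ} {k : ℕ} {S : Finset ℕ}
    (h : IsPermOf (π ++ [k]) S) : IsPermOf π (S \ {k}) := by
  obtain ⟨hnodup, hmem⟩ := h
  have hk : k ∉ π := fun hk =>
    (List.nodup_append.mp hnodup).2.2 k hk k (List.mem_singleton_self k) rfl
  refine ⟨hnodup.sublist (List.sublist_append_left _ _), fun x => ?_⟩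
  rw [Finset.mem_sdiff, Finset.mem_singleton, ← hmem, List.mem_append, List.mem_singleton]
  constructor
  · intro hx
    exact ⟨Or.inl hx, by rintro rfl; exact hk hx⟩
  · rintro ⟨hx | rfl, hxk⟩
    exacts [hx, absurd rfl hxk]

lemma exists_nonDominated_le (p : ℕ → Fin 3 → ℕ) {S' : Finset ℕ} {π₀ : List ℕ}
    (hπ₀ : IsPermOf π₀ S') :
    ∃ π, IsPermOf π S' ∧ NonDominated p π S' ∧
      C2 p π ≤ C2 p π₀ ∧ C3 p π ≤ C3 p π₀ := by
  induction hn : C2 p π₀ + C3 p π₀ using Nat.strong_induction_on generalizing π₀ with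
  | _ n ih =>
    by_cases hnd : NonDominated p π₀ S'
    · exact ⟨π₀, hπ₀, hnd, le_rfl, le_rfl⟩
    obtain ⟨π', hπ', h2, h3, hne⟩ := not_not.mp hnd
    have hlt : C2 p π' + C3 p π' < n := by
      subst hn
      rcases h2.lt_or_eq with h2 | h2
      · omega
      rcases h3.lt_or_eq with h3 | h3
      · omega
      exact absurd (by rw [h2, h3]) hne
    obtain ⟨π, hπ, hπnd, h2', h3'⟩ := ih _ hlt hπ' rfl
    exact ⟨π, hπ, hπnd, h2'.trans h2, h3'.trans h3⟩

theorem stmt_8_general (p : ℕ → Fin 3 → ℕ) (S : Finset ℕ)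
    (σ π₀ : List ℕ) (k : ℕ) (hσ : IsPermOf σ S) (hsplit : σ = π₀ ++ [k]) :
    ∃ π : List ℕ, IsPermOf π (S \ {k}) ∧ NonDominated p π (S \ {k}) ∧
      C2 p (π ++ [k]) ≤ C2 p σ ∧ C3 p (π ++ [k]) ≤ C3 p σ := by
  subst hsplit
  have hπ₀ : IsPermOf π₀ (S \ {k}) := hσ.of_append_singleton
  obtain ⟨π, hπ, hπnd, h2, h3⟩ := exists_nonDominated_le p hπ₀
  exact ⟨π, hπ, hπnd,
    C2_C3_append_le p k (flowComp_fst_eq_of_perm p (hπ.perm hπ₀)) h2 h3⟩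

theorem stmt_8 (p : ℕ → Fin 3 → ℕ) (S : Finset ℕ) (hS : S.Nonempty)
    (σ π₀ : List ℕ) (k : ℕ) (hσ : IsPermOf σ S) (hsplit : σ = π₀ ++ [k]) :
    ∃ π : List ℕ, IsPermOf π (S \ {k}) ∧ NonDominated p π (S \ {k}) ∧
      C2 p (π ++ [k]) ≤ C2 p σ ∧ C3 p (π ++ [k]) ≤ C3 p σ :=
  stmt_8_general p S σ π₀ k hσ hsplit
end

section
/- Let a_1, …, a_n be positive integers, let s = Σ_{i=1}^{n} a_i, and let t be an integer with 0 < t < s. Consider the three-machine flowshop instance with n+1 jobs: job 0 has processing times (t, t, s−t) on machines 1, 2, 3, and each job i with 1 ≤ i ≤ n has processing times (0, a_i, 0). Then there exists a subset I ⊆ {1, …, n} with Σ_{i∈I} a_i = t if and only if there exists a permutation π of all n+1 jobs with C_3(π) ≤ s + t. -/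
/-! The jobs `1, …, n` only occupy machine 2, so a schedule is determined by the jobs `A`
scheduled before job `0` and the jobs `B` after it, and its makespan is
`max (∑ A) t + t + max (s - t) (∑ B)`. Since `∑ A + ∑ B = s`, this is at most `s + t` exactly
when `∑ A = t`. -/

def flowStep (p : ℕ → Fin 3 → ℕ) (c : ℕ × ℕ × ℕ) (i : ℕ) : ℕ × ℕ × ℕ :=
  (c.1 + p i 0, max c.2.1 (c.1 + p i 0) + p i 1,
    max c.2.2 (max c.2.1 (c.1 + p i 0) + p i 1) + p i 2)

section Flowshop

variable {p : ℕ → Fin 3 → ℕ}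

@[simp]
lemma flowComp_nil : flowComp p [] = (0, 0, 0) := rfl

lemma flowComp_concat (π : List ℕ) (i : ℕ) :
    flowComp p (π ++ [i]) = flowStep p (flowComp p π) i := by
  simp only [flowComp, List.foldl_append, List.foldl_cons, List.foldl_nil]
  rfl

lemma flowComp_fst_le_C2_le_C3 (π : List ℕ) :
    (flowComp p π).1 ≤ C2 p π ∧ C2 p π ≤ C3 p π := by
  induction π using List.reverseRecOn with
  | nil => simp [C2, C3]
  | append_singleton π i _ =>
    simp only [C2, C3, flowComp_concat, flowStep]
    omega

lemma flowComp_append_of_machine2 (π L : List ℕ) (hL : ∀ i ∈ L, p i 0 = 0 ∧ p i 2 = 0) :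
    flowComp p (π ++ L) =
      ((flowComp p π).1, C2 p π + (L.map (p · 1)).sum,
        max (C3 p π) (C2 p π + (L.map (p · 1)).sum)) := by
  induction L generalizing π with
  | nil =>
    have := flowComp_fst_le_C2_le_C3 (p := p) π
    simp only [List.append_nil, List.map_nil, List.sum_nil, Nat.add_zero,
      max_eq_left this.2]
    rfl
  | cons i L ih =>
    obtain ⟨hi0, hi2⟩ := hL i (by simp)
    have hord := flowComp_fst_le_C2_le_C3 (p := p) π
    rw [show π ++ i :: L = π ++ [i] ++ L by simp, ih _ fun j hj => hL j (by simp [hj])]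
    simp only [C2, C3, flowComp_concat, flowStep, hi0, hi2, List.map_cons, List.sum_cons] at hord ⊢
    congr 2 <;> omega

lemma C3_append_cons_of_machine2 {A B : List ℕ} (j : ℕ)
    (hA : ∀ i ∈ A, p i 0 = 0 ∧ p i 2 = 0) (hB : ∀ i ∈ B, p i 0 = 0 ∧ p i 2 = 0) :
    C3 p (A ++ j :: B) =
      max (A.map (p · 1)).sum (p j 0) + p j 1 + max (p j 2) (B.map (p · 1)).sum := by
  have hA' := flowComp_append_of_machine2 [] A hA
  rw [List.nil_append] at hA'
  rw [show A ++ j :: B = A ++ [j] ++ B by simp, C3, flowComp_append_of_machine2 _ B hB,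
    C3, C2, flowComp_concat, hA']
  simp only [flowComp_nil, C2, C3, flowStep]
  omega

end Flowshop

lemma isPermOf_append_cons_iff {A B : List ℕ} {j : ℕ} {S : Finset ℕ} :
    IsPermOf (A ++ j :: B) S ↔
      A.Nodup ∧ B.Nodup ∧ Disjoint A.toFinset B.toFinset ∧ j ∈ S ∧
        A.toFinset ∪ B.toFinset = S.erase j := by
  simp only [IsPermOf, List.nodup_cons, List.nodup_append', List.disjoint_cons_right,
    List.disjoint_toFinset_iff_disjoint, Finset.ext_iff, Finset.mem_union, List.mem_toFinset,
    Finset.mem_erase, List.mem_append, List.mem_cons]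
  constructor
  · rintro ⟨⟨hA, ⟨hjB, hB⟩, hjA, hAB⟩, hmem⟩
    refine ⟨hA, hB, hAB, (hmem j).1 (by simp), fun x => ?_⟩
    rw [← hmem x]
    grind
  · rintro ⟨hA, hB, hAB, hj, hmem⟩
    have hjA : j ∉ A := fun h => ((hmem j).1 (Or.inl h)).1 rfl
    have hjB : j ∉ B := fun h => ((hmem j).1 (Or.inr h)).1 rfl
    exact ⟨⟨hA, ⟨hjB, hB⟩, hjA, hAB⟩, fun x => by grind⟩

lemma C3_append_zero_cons {n : ℕ} {a : ℕ → ℕ} {s t : ℕ} {p : ℕ → Fin 3 → ℕ}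
    (hp0 : p 0 0 = t ∧ p 0 1 = t ∧ p 0 2 = s - t)
    (hpi : ∀ i ∈ Finset.Icc 1 n, p i 0 = 0 ∧ p i 1 = a i ∧ p i 2 = 0)
    {A B : List ℕ} (hA : A.Nodup) (hB : B.Nodup)
    (hAn : A.toFinset ⊆ Finset.Icc 1 n) (hBn : B.toFinset ⊆ Finset.Icc 1 n) :
    C3 p (A ++ 0 :: B) =
      max (∑ i ∈ A.toFinset, a i) t + t + max (s - t) (∑ i ∈ B.toFinset, a i) := by
  have machine2 (L : List ℕ) (hLn : L.toFinset ⊆ Finset.Icc 1 n) :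
      ∀ i ∈ L, p i 0 = 0 ∧ p i 2 = 0 := fun i hi =>
    have hi := hpi i (hLn (List.mem_toFinset.2 hi))
    ⟨hi.1, hi.2.2⟩
  have work (L : List ℕ) (hL : L.Nodup) (hLn : L.toFinset ⊆ Finset.Icc 1 n) :
      (L.map (p · 1)).sum = ∑ i ∈ L.toFinset, a i := by
    rw [← List.sum_toFinset _ hL]
    exact Finset.sum_congr rfl fun i hi => (hpi i (hLn hi)).2.1
  rw [C3_append_cons_of_machine2 0 (machine2 A hAn) (machine2 B hBn), work A hA hAn,
    work B hB hBn, hp0.1, hp0.2.1, hp0.2.2]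

theorem stmt_14_general (n : ℕ) (a : ℕ → ℕ)
    (s t : ℕ) (hs : s = ∑ i ∈ Finset.Icc 1 n, a i)
    (p : ℕ → Fin 3 → ℕ)
    (hp0 : p 0 0 = t ∧ p 0 1 = t ∧ p 0 2 = s - t)
    (hpi : ∀ i ∈ Finset.Icc 1 n, p i 0 = 0 ∧ p i 1 = a i ∧ p i 2 = 0) :
    (∃ I : Finset ℕ, I ⊆ Finset.Icc 1 n ∧ ∑ i ∈ I, a i = t) ↔
      (∃ π : List ℕ, IsPermOf π (Finset.range (n + 1)) ∧ C3 p π ≤ s + t) := by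
  have hIcc : (Finset.range (n + 1)).erase 0 = Finset.Icc 1 n := by
    ext i
    simp only [Finset.mem_erase, Finset.mem_range, Finset.mem_Icc]
    omega
  constructor
  · rintro ⟨I, hI, hIt⟩
    have hsplit := Finset.sum_sdiff (f := a) hI
    refine ⟨I.toList ++ 0 :: (Finset.Icc 1 n \ I).toList, ?_, ?_⟩
    · rw [isPermOf_append_cons_iff, hIcc]
      simp [Finset.nodup_toList, Finset.disjoint_sdiff, Finset.union_sdiff_of_subset hI]
    · rw [C3_append_zero_cons hp0 hpi I.nodup_toList (Finset.nodup_toList _) (by simpa) (by simp)]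
      simp only [Finset.toList_toFinset]
      omega
  · rintro ⟨π, hπ, hC3⟩
    obtain ⟨A, B, rfl⟩ := List.append_of_mem ((hπ.2 0).2 (by simp))
    obtain ⟨hA, hB, hAB, -, hunion⟩ := isPermOf_append_cons_iff.1 hπ
    rw [hIcc] at hunion
    have hsplit := Finset.sum_union (f := a) hAB
    rw [hunion] at hsplit
    rw [C3_append_zero_cons hp0 hpi hA hB (hunion ▸ Finset.subset_union_left)
      (hunion ▸ Finset.subset_union_right)] at hC3
    exact ⟨A.toFinset, hunion ▸ Finset.subset_union_left, by omega⟩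

theorem stmt_14 (n : ℕ) (a : ℕ → ℕ) (ha : ∀ i ∈ Finset.Icc 1 n, 0 < a i)
    (s t : ℕ) (hs : s = ∑ i ∈ Finset.Icc 1 n, a i) (ht0 : 0 < t) (hts : t < s)
    (p : ℕ → Fin 3 → ℕ)
    (hp0 : p 0 0 = t ∧ p 0 1 = t ∧ p 0 2 = s - t)
    (hpi : ∀ i ∈ Finset.Icc 1 n, p i 0 = 0 ∧ p i 1 = a i ∧ p i 2 = 0) :
    (∃ I : Finset ℕ, I ⊆ Finset.Icc 1 n ∧ ∑ i ∈ I, a i = t) ↔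
      (∃ π : List ℕ, IsPermOf π (Finset.range (n + 1)) ∧ C3 p π ≤ s + t) :=
  stmt_14_general n a s t hs p hp0 hpi
end
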